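/- Let $\lambda > 0$ and let $L:[t_0,\infty)\to[0,\infty)$ be measurable with $\lim_{t\to\infty}\int_t^{t+1}L(s)\,ds = 0$ and $\sup_{t\ge t_0}\int_t^{t+1}L(s)\,ds < \infty$. Then $\lim_{t\to\infty}\int_{t_0}^t e^{-\lambda(t-s)}L(s)\,ds = 0$. -/
import Mathlib


open MeasureTheory Filter

/-- If the unit-interval averages of `L ≥ 0` tend to zero and are bounded, then
the exponentially weighted integral `∫_{t₀}^t e^{-λ(t-s)} L(s) ds → 0` as `t → ∞`. -/
theorem stmt12 (lam t0 : ℝ) (hlam : 0 < lam)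
    (L : ℝ → ℝ) (hL_meas : Measurable L)
    (hL_nonneg : ∀ t, t0 ≤ t → 0 ≤ L t)
    (hL_int : ∀ t, t0 ≤ t → IntegrableOn L (Set.Icc t (t + 1)))
    (hL_lim : Tendsto (fun t => ∫ s in t..t + 1, L s) atTop (nhds 0))
    (hL_bdd : BddAbove (Set.range fun t => ∫ s in t..t + 1, L s)) :
    Tendsto (fun t => ∫ s in t0..t, Real.exp (-lam * (t - s)) * L s)
      atTop (nhds 0) := by
  set q : ℝ := Real.exp (-lam) with hqdef
  have hq0 : 0 < q := Real.exp_pos _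
  have hq1 : q < 1 := Real.exp_lt_one_iff.mpr (by linarith)
  have hq1' : 0 < 1 - q := by linarith
  set L' : ℝ → ℝ := (Set.Ici t0).indicator L with hL'def
  have hL'meas : Measurable L' := hL_meas.indicator measurableSet_Ici
  have hL'nonneg : ∀ s, 0 ≤ L' s := fun s =>
    Set.indicator_nonneg (fun x hx => hL_nonneg x hx) s
  have hL'eq : ∀ s, t0 ≤ s → L' s = L s := fun s hs => Set.indicator_of_mem hs L
  -- integrability of L' on unit intervals
  have hint1 : ∀ a : ℝ, IntegrableOn L' (Set.Icc a (a + 1)) := by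
    intro a
    rw [hL'def, IntegrableOn, integrable_indicator_iff measurableSet_Ici]
    rw [IntegrableOn, Measure.restrict_restrict measurableSet_Ici]
    by_cases h : t0 ≤ a
    · exact (hL_int a h).mono_set Set.inter_subset_right
    · refine (hL_int t0 le_rfl).mono_set ?_
      rintro s ⟨hs1, hs2, hs3⟩
      exact ⟨hs1, by linarith [hs3]⟩
  have hintn : ∀ (a : ℝ) (n : ℕ), IntegrableOn L' (Set.Icc a (a + n)) := by
    intro a n
    induction n with
    | zero => exact (hint1 a).mono_set (by
        intro s hs; push_cast at hs ⊢
        exact ⟨hs.1, by linarith [hs.2]⟩)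
    | succ n ih =>
        have h1 : Set.Icc a (a + (n + 1 : ℕ)) ⊆
            Set.Icc a (a + n) ∪ Set.Icc (a + n) (a + n + 1) := by
          intro s hs
          push_cast at hs
          rcases le_total s (a + n) with h | h
          · exact Or.inl ⟨hs.1, h⟩
          · exact Or.inr ⟨h, by linarith [hs.2]⟩
        exact (ih.union (hint1 (a + n))).mono_set h1
  have hintc : ∀ a b : ℝ, IntegrableOn L' (Set.Icc a b) := by
    intro a b
    refine (hintn a ⌈b - a⌉₊).mono_set ?_
    intro s hs
    exact ⟨hs.1, hs.2.trans (by linarith [Nat.le_ceil (b - a)])⟩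
  have hiiL' : ∀ a b : ℝ, IntervalIntegrable L' volume a b := by
    intro a b
    rw [intervalIntegrable_iff]
    exact (hintc (min a b) (max a b)).mono_set Set.uIoc_subset_uIcc
  have hii : ∀ t a b : ℝ,
      IntervalIntegrable (fun s => Real.exp (-lam * (t - s)) * L' s) volume a b := by
    intro t a b
    rw [intervalIntegrable_iff]
    refine (IntegrableOn.continuousOn_mul ?_ (hintc (min a b) (max a b))
      isCompact_Icc).mono_set Set.uIoc_subset_uIcc
    exact (Real.continuous_exp.comp (by continuity)).continuousOn
  -- notation for averages
  set A : ℝ → ℝ := fun a => ∫ s in a..a + 1, L s with hAdef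
  set A' : ℝ → ℝ := fun a => ∫ s in a..a + 1, L' s with hA'def
  have hA'nonneg : ∀ a, 0 ≤ A' a := fun a =>
    intervalIntegral.integral_nonneg (by linarith) (fun s _ => hL'nonneg s)
  have hA'eqA : ∀ a, t0 ≤ a → A' a = A a := by
    intro a ha
    refine intervalIntegral.integral_congr fun s hs => ?_
    rw [Set.uIcc_of_le (by linarith)] at hs
    exact hL'eq s (le_trans ha hs.1)
  -- set-integral form of A'
  have hA'set : ∀ a : ℝ, A' a = ∫ s in Set.Ioc a (a + 1) ∩ Set.Ici t0, L s := by
    intro a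
    show (∫ s in a..a + 1, L' s) = _
    rw [intervalIntegral.integral_of_le (by linarith : a ≤ a + 1)]
    rw [hL'def, setIntegral_indicator measurableSet_Ici]
  -- bound M on A'
  obtain ⟨m, hm⟩ := hL_bdd
  have hmub : ∀ a, A a ≤ m := fun a => hm (Set.mem_range_self a)
  set M : ℝ := max m 0 with hMdef
  have hM0 : 0 ≤ M := le_max_right _ _
  have hA'M : ∀ a, A' a ≤ M := by
    intro a
    rcases le_total t0 a with h | h
    · exact (hA'eqA a h).le.trans ((hmub a).trans (le_max_left _ _))
    · have h1 : A' a ≤ ∫ s in Set.Icc t0 (t0 + 1), L s := by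
        rw [hA'set a]
        refine setIntegral_mono_set (hL_int t0 le_rfl) ?_ ?_
        · exact (ae_restrict_iff' measurableSet_Icc).mpr
            (Filter.Eventually.of_forall fun s hs => hL_nonneg s hs.1)
        · refine Filter.Eventually.of_forall ?_
          rintro s ⟨hs1, hs2⟩
          exact ⟨hs2, by linarith [hs1.2]⟩
      have h2 : (∫ s in Set.Icc t0 (t0 + 1), L s) = A t0 := by
        show _ = ∫ s in t0..t0 + 1, L s
        rw [intervalIntegral.integral_of_le (by linarith : t0 ≤ t0 + 1),
          integral_Icc_eq_integral_Ioc]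
      exact h1.trans (h2.le.trans ((hmub t0).trans (le_max_left _ _)))
  -- key estimate by induction
  have keyH : ∀ (t : ℝ) (n : ℕ),
      (∫ s in (t - n)..t, Real.exp (-lam * (t - s)) * L' s) ≤
        ∑ k ∈ Finset.range n, q ^ k * A' (t - (k + 1)) := by
    intro t n
    induction n with
    | zero => simp
    | succ n ih =>
        have hsplit : (∫ s in (t - (n + 1 : ℕ))..t, Real.exp (-lam * (t - s)) * L' s) =
            (∫ s in (t - (n + 1 : ℕ))..(t - n), Real.exp (-lam * (t - s)) * L' s) +
            (∫ s in (t - n)..t, Real.exp (-lam * (t - s)) * L' s) :=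
          (intervalIntegral.integral_add_adjacent_intervals (hii t _ _) (hii t _ _)).symm
        have hpiece : (∫ s in (t - (n + 1 : ℕ))..(t - n), Real.exp (-lam * (t - s)) * L' s) ≤
            q ^ n * A' (t - (n + 1)) := by
          have hle : (t - (n + 1 : ℕ) : ℝ) ≤ t - n := by push_cast; linarith
          have hmono : (∫ s in (t - (n + 1 : ℕ))..(t - n), Real.exp (-lam * (t - s)) * L' s) ≤
              ∫ s in (t - (n + 1 : ℕ))..(t - n), q ^ n * L' s := by
            refine intervalIntegral.integral_mono_on hle (hii t _ _)
              ((hiiL' _ _).const_mul _) fun s hs => ?_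
            have hs2 : s ≤ t - n := hs.2
            have hexp : Real.exp (-lam * (t - s)) ≤ q ^ n := by
              rw [hqdef, ← Real.exp_nat_mul]
              exact Real.exp_le_exp.mpr (by nlinarith)
            exact mul_le_mul_of_nonneg_right hexp (hL'nonneg s)
          rw [intervalIntegral.integral_const_mul] at hmono
          refine hmono.trans (le_of_eq ?_)
          congr 1
          rw [hA'def]
          congr 1 <;> push_cast <;> ring
        rw [hsplit, Finset.sum_range_succ]
        have := add_le_add hpiece ih
        linarith [this]
  -- comparison of F with the key sum
  have keyF : ∀ t : ℝ, t0 ≤ t → ∀ n : ℕ, t - n ≤ t0 →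
      (∫ s in t0..t, Real.exp (-lam * (t - s)) * L s) ≤
        ∑ k ∈ Finset.range n, q ^ k * A' (t - (k + 1)) := by
    intro t ht n hn
    have h1 : (∫ s in t0..t, Real.exp (-lam * (t - s)) * L s) =
        ∫ s in t0..t, Real.exp (-lam * (t - s)) * L' s := by
      refine intervalIntegral.integral_congr fun s hs => ?_
      rw [Set.uIcc_of_le ht] at hs
      rw [hL'eq s hs.1]
    have h2 : (∫ s in t0..t, Real.exp (-lam * (t - s)) * L' s) ≤
        ∫ s in (t - n)..t, Real.exp (-lam * (t - s)) * L' s := by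
      have hadd : (∫ s in (t - n)..t0, Real.exp (-lam * (t - s)) * L' s) +
          (∫ s in t0..t, Real.exp (-lam * (t - s)) * L' s) =
          ∫ s in (t - n)..t, Real.exp (-lam * (t - s)) * L' s :=
        intervalIntegral.integral_add_adjacent_intervals (hii t _ _) (hii t _ _)
      have hpos : 0 ≤ ∫ s in (t - n)..t0, Real.exp (-lam * (t - s)) * L' s :=
        intervalIntegral.integral_nonneg hn
          (fun s _ => mul_nonneg (Real.exp_nonneg _) (hL'nonneg s))
      linarith
    rw [h1]
    exact h2.trans (keyH t n)
  -- now the main tendsto argument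
  rw [Metric.tendsto_atTop]
  intro ε hε
  -- choose N
  have htail : Tendsto (fun N : ℕ => M * q ^ N / (1 - q)) atTop (nhds 0) := by
    have h := (tendsto_pow_atTop_nhds_zero_of_lt_one hq0.le hq1).const_mul M
    have h2 := h.div_const (1 - q)
    simpa using h2
  obtain ⟨N, hN⟩ := (htail.eventually (gt_mem_nhds (half_pos hε))).exists
  -- choose ε₁ and T
  set ε₁ : ℝ := ε / (2 * N + 2) with hε₁def
  have hε₁pos : 0 < ε₁ := by positivity
  obtain ⟨T, hT⟩ := (Metric.tendsto_atTop.mp hL_lim) ε₁ hε₁pos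
  have hA'small : ∀ a, max T t0 ≤ a → A' a ≤ ε₁ := by
    intro a ha
    rw [hA'eqA a (le_trans (le_max_right _ _) ha)]
    have := hT a (le_trans (le_max_left _ _) ha)
    rw [Real.dist_eq, sub_zero] at this
    exact (le_abs_self _).trans this.le
  refine ⟨max (t0 + N) (max T t0 + N), fun t ht => ?_⟩
  have ht1 : t0 + N ≤ t := le_trans (le_max_left _ _) ht
  have ht2 : max T t0 + N ≤ t := le_trans (le_max_right _ _) ht
  have ht0 : t0 ≤ t := by
    have : (0 : ℝ) ≤ N := Nat.cast_nonneg N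
    linarith
  set n : ℕ := ⌈t - t0⌉₊ with hndef
  have hn1 : t - n ≤ t0 := by
    have := Nat.le_ceil (t - t0)
    linarith
  have hn2 : N ≤ n := by
    have h : (N : ℝ) ≤ t - t0 := by linarith
    have := Nat.ceil_mono h
    rwa [Nat.ceil_natCast] at this
  have hF0 : 0 ≤ ∫ s in t0..t, Real.exp (-lam * (t - s)) * L s :=
    intervalIntegral.integral_nonneg ht0
      (fun s hs => mul_nonneg (Real.exp_nonneg _) (hL_nonneg s hs.1))
  have hFle := keyF t ht0 n hn1
  have hsplit : ∑ k ∈ Finset.range n, q ^ k * A' (t - (k + 1)) =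
      (∑ k ∈ Finset.range N, q ^ k * A' (t - (k + 1))) +
      ∑ k ∈ Finset.Ico N n, q ^ k * A' (t - (k + 1)) := by
    conv_lhs => rw [Finset.range_eq_Ico]
    rw [← Finset.sum_Ico_consecutive (fun k => q ^ k * A' (t - ((k : ℝ) + 1)))
      (Nat.zero_le N) hn2, ← Finset.range_eq_Ico]
  have hfirst : (∑ k ∈ Finset.range N, q ^ k * A' (t - (k + 1))) ≤ N * ε₁ := by
    have hterm : ∀ k ∈ Finset.range N, q ^ k * A' (t - (k + 1)) ≤ ε₁ := by
      intro k hk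
      have hkN : k + 1 ≤ N := Finset.mem_range.mp hk
      have hkN' : (k : ℝ) + 1 ≤ N := by exact_mod_cast hkN
      have hsm : A' (t - (k + 1)) ≤ ε₁ := hA'small _ (by linarith)
      calc q ^ k * A' (t - (k + 1)) ≤ 1 * ε₁ :=
            mul_le_mul (pow_le_one₀ hq0.le hq1.le) hsm (hA'nonneg _) one_pos.le
        _ = ε₁ := one_mul _
    calc (∑ k ∈ Finset.range N, q ^ k * A' (t - (k + 1))) ≤
          ∑ _k ∈ Finset.range N, ε₁ := Finset.sum_le_sum hterm
      _ = N * ε₁ := by simp [Finset.sum_const, nsmul_eq_mul]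
  have hsecond : (∑ k ∈ Finset.Ico N n, q ^ k * A' (t - (k + 1))) ≤ M * q ^ N / (1 - q) := by
    have h1 : (∑ k ∈ Finset.Ico N n, q ^ k * A' (t - (k + 1))) ≤
        ∑ k ∈ Finset.Ico N n, q ^ k * M :=
      Finset.sum_le_sum fun k _ => mul_le_mul_of_nonneg_left (hA'M _) (pow_nonneg hq0.le k)
    have h3 : (∑ k ∈ Finset.Ico N n, q ^ k) = (q ^ N - q ^ n) / (1 - q) :=
      geom_sum_Ico' hq1.ne hn2
    have h4 : (q ^ N - q ^ n) / (1 - q) ≤ q ^ N / (1 - q) :=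
      (div_le_div_iff_of_pos_right hq1').mpr (by linarith [pow_nonneg hq0.le n])
    have h5 : (∑ k ∈ Finset.Ico N n, q ^ k * M) = (∑ k ∈ Finset.Ico N n, q ^ k) * M :=
      (Finset.sum_mul _ _ _).symm
    calc (∑ k ∈ Finset.Ico N n, q ^ k * A' (t - (k + 1))) ≤
          (∑ k ∈ Finset.Ico N n, q ^ k) * M := by rw [← h5]; exact h1
      _ ≤ q ^ N / (1 - q) * M := by
          refine mul_le_mul_of_nonneg_right ?_ hM0
          rw [h3]; exact h4
      _ = M * q ^ N / (1 - q) := by ring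
  have hfirst' : (N : ℝ) * ε₁ ≤ ε / 2 := by
    have hden : (0 : ℝ) < 2 * N + 2 := by positivity
    rw [hε₁def, mul_comm, div_mul_eq_mul_div, div_le_div_iff₀ hden two_pos]
    nlinarith [Nat.cast_nonneg (α := ℝ) N, hε.le]
  rw [Real.dist_eq, sub_zero, abs_of_nonneg hF0]
  calc (∫ s in t0..t, Real.exp (-lam * (t - s)) * L s) ≤
        ∑ k ∈ Finset.range n, q ^ k * A' (t - (k + 1)) := hFle
    _ < ε := by rw [hsplit]; linarith
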